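/- arXiv:1512.03503 — 2 statements merged into one kernel-verified Lean document; each statement's English description precedes it below -/
import Mathlib

section
/- Let E ∈ K^{m×σ}, M ∈ K^{σ×σ}, s ∈ ℕ^m, δ a bound on the degree of the minimal polynomial of M, and let (δ_1,…,δ_m) be the s-minimal degree of (E,M). If p ∈ K[X]^{1×m} with deg p ≤ δ is an interpolant for (E,M) with s-pivot index c, then its s-pivot degree satisfies deg(p_c) ≥ δ_c. Moreover, for every c there exists an interpolant p for (E,M) with deg p ≤ δ, s-pivot index c, and s-pivot degree exactly δ_c. -/
/-!
Under `p ↦ ((j, e) ↦ (p j).coeff e)`, interpolants of degree at most `δ` are exactly the linear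
relations among the rows `E j · M ^ e` (`e ≤ δ`) of the Krylov matrix. An interpolant has
`s`-pivot index `c` and `s`-pivot degree `d` precisely when `(c, d)` is the last position, in the
priority order `keyLt`, carrying a nonzero coefficient; dividing by that coefficient shows that
row `(c, d)` depends on the earlier rows, and conversely such a dependency, read backwards, is an
interpolant with leading position `(c, d)`. Minimality of `δ_c` gives the lower bound; for the
existence part, `δ_c ≤ δ` because `X ^ (δ - deg μ_M) * μ_M` yields a dependency at `(c, δ)`.
-/
open Polynomial Matrix

/-- Priority comparison on pairs `(c,d)`: lexicographic on `(s_c + d, c)`. -/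
def keyLt {m : ℕ} (s : Fin m → ℕ) (x y : Fin m × ℕ) : Prop :=
  s x.1 + x.2 < s y.1 + y.2 ∨ (s x.1 + x.2 = s y.1 + y.2 ∧ x.1 < y.1)

/-- Row `(c,d)` of the priority-permuted Krylov matrix `K_{δ,s}(E,M)` (with rows
`E·M^d` indexed by pairs and ordered by `keyLt`) is a `K`-linear combination of the
rows preceding it. -/
def DepEarlier {K : Type*} [Field K] {m σ : ℕ} (E : Matrix (Fin m) (Fin σ) K)
    (M : Matrix (Fin σ) (Fin σ) K) (s : Fin m → ℕ) (δ : ℕ) (c : Fin m) (d : ℕ) : Prop :=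
  Matrix.vecMul (E c) (M ^ d) ∈
    Submodule.span K
      ((fun y : Fin m × ℕ => Matrix.vecMul (E y.1) (M ^ y.2)) ''
        {y | y.2 ≤ δ ∧ keyLt s y (c, d)})

/-- `dm` is the `s`-minimal degree of `(E,M)`: `dm c` is the smallest `d` such that
row `(c,d)` of `K_{δ,s}(E,M)` is a linear combination of the earlier rows. -/
def IsMinDeg {K : Type*} [Field K] {m σ : ℕ} (E : Matrix (Fin m) (Fin σ) K)
    (M : Matrix (Fin σ) (Fin σ) K) (s : Fin m → ℕ) (δ : ℕ) (dm : Fin m → ℕ) : Prop :=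
  ∀ c, DepEarlier E M s δ c (dm c) ∧ ∀ d, d < dm c → ¬ DepEarlier E M s δ c d

/-- `p` is an interpolant for `(E,M)`: `∑ c p_c · e_c = 0` with `p · e = e · p(M)`. -/
def IsInterpolant {K : Type*} [Field K] {m σ : ℕ} (E : Matrix (Fin m) (Fin σ) K)
    (M : Matrix (Fin σ) (Fin σ) K) (p : Fin m → Polynomial K) : Prop :=
  ∑ c, Matrix.vecMul (E c) (Polynomial.aeval M (p c)) = 0

/-- The `s`-row degree of a row vector `p`. -/
noncomputable def rowDegVec {K : Type*} [Field K] {m : ℕ} (s : Fin m → ℕ)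
    (p : Fin m → Polynomial K) : WithBot ℕ :=
  Finset.univ.sup fun j => (p j).degree + (s j : WithBot ℕ)

/-- `c` is the `s`-pivot index of `p`. -/
noncomputable def IsPivotIdx {K : Type*} [Field K] {m : ℕ} (s : Fin m → ℕ)
    (p : Fin m → Polynomial K) (c : Fin m) : Prop :=
  ((p c).degree + (s c : WithBot ℕ) = rowDegVec s p) ∧
    ∀ c', ((p c').degree + (s c' : WithBot ℕ) = rowDegVec s p) → c' ≤ c

section LeadingTerm

variable {K : Type*} [Field K] {m : ℕ} (s : Fin m → ℕ)

def IsLeadingTerm (p : Fin m → K[X]) (c : Fin m) (d : ℕ) : Prop :=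
  (p c).coeff d ≠ 0 ∧ ∀ j e, (p j).coeff e ≠ 0 → (j, e) ≠ (c, d) → keyLt s (j, e) (c, d)

variable {s}

lemma keyLt_irrefl (y : Fin m × ℕ) : ¬ keyLt s y y := by
  simp [keyLt]

lemma degree_add_natCast_eq_of_ne_zero {f : K[X]} (hf : f ≠ 0) (k : ℕ) :
    f.degree + (k : WithBot ℕ) = ((f.natDegree + k : ℕ) : WithBot ℕ) := by
  rw [degree_eq_natDegree hf, Nat.cast_add]

lemma degree_add_le_rowDegVec (p : Fin m → K[X]) (j : Fin m) :
    (p j).degree + (s j : WithBot ℕ) ≤ rowDegVec s p :=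
  Finset.le_sup (f := fun j => (p j).degree + (s j : WithBot ℕ)) (Finset.mem_univ j)

lemma rowDegVec_eq_bot_iff {p : Fin m → K[X]} : rowDegVec s p = ⊥ ↔ p = 0 := by
  simp [rowDegVec, Finset.sup_eq_bot_iff, WithBot.add_eq_bot, funext_iff]

namespace IsLeadingTerm

variable {p : Fin m → K[X]} {c : Fin m} {d : ℕ}

lemma apply_ne_zero (h : IsLeadingTerm s p c d) : p c ≠ 0 :=
  fun h0 => h.1 (by rw [h0, coeff_zero])

lemma ne_zero (h : IsLeadingTerm s p c d) : p ≠ 0 := fun h0 => h.apply_ne_zero (by rw [h0]; rfl)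

lemma add_le_of_coeff_ne_zero (h : IsLeadingTerm s p c d) {j : Fin m} {e : ℕ}
    (he : (p j).coeff e ≠ 0) : s j + e ≤ s c + d ∧ (s j + e = s c + d → j ≤ c) := by
  by_cases hjc : (j, e) = (c, d)
  · obtain ⟨rfl, rfl⟩ := Prod.ext_iff.mp hjc
    exact ⟨le_rfl, fun _ => le_rfl⟩
  · rcases h.2 j e he hjc with hlt | ⟨heq, hlt⟩
    · exact ⟨hlt.le, fun heq => absurd heq hlt.ne⟩
    · exact ⟨heq.le, fun _ => hlt.le⟩

lemma natDegree_eq (h : IsLeadingTerm s p c d) : (p c).natDegree = d := by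
  have := (h.add_le_of_coeff_ne_zero (leadingCoeff_ne_zero.mpr h.apply_ne_zero)).1
  exact le_antisymm (by omega) (le_natDegree_of_ne_zero h.1)

lemma degree_add_le (h : IsLeadingTerm s p c d) (j : Fin m) :
    (p j).degree + (s j : WithBot ℕ) ≤ ((s c + d : ℕ) : WithBot ℕ) := by
  by_cases hj : p j = 0
  · simp [hj]
  rw [degree_add_natCast_eq_of_ne_zero hj]
  have := (h.add_le_of_coeff_ne_zero (leadingCoeff_ne_zero.mpr hj)).1
  exact_mod_cast (by omega)

lemma rowDegVec_eq (h : IsLeadingTerm s p c d) : rowDegVec s p = ((s c + d : ℕ) : WithBot ℕ) := by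
  refine le_antisymm (Finset.sup_le fun j _ => h.degree_add_le j) ?_
  calc ((s c + d : ℕ) : WithBot ℕ) = (p c).degree + (s c : WithBot ℕ) := by
        rw [degree_add_natCast_eq_of_ne_zero h.apply_ne_zero, h.natDegree_eq, add_comm]
    _ ≤ rowDegVec s p := degree_add_le_rowDegVec p c

lemma isPivotIdx (h : IsLeadingTerm s p c d) : IsPivotIdx s p c := by
  refine ⟨?_, fun c' hc' => ?_⟩
  · rw [h.rowDegVec_eq, degree_add_natCast_eq_of_ne_zero h.apply_ne_zero, h.natDegree_eq, add_comm]
  · have hpc' : p c' ≠ 0 := by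
      rintro h0
      rw [h0, degree_zero, WithBot.bot_add] at hc'
      exact WithBot.bot_ne_coe (hc'.trans h.rowDegVec_eq)
    rw [h.rowDegVec_eq, degree_add_natCast_eq_of_ne_zero hpc'] at hc'
    have hc'' : (p c').natDegree + s c' = s c + d := by exact_mod_cast hc'
    exact (h.add_le_of_coeff_ne_zero (leadingCoeff_ne_zero.mpr hpc')).2 (by omega)

end IsLeadingTerm

lemma IsPivotIdx.isLeadingTerm {p : Fin m → K[X]} {c : Fin m} (h : IsPivotIdx s p c) (hp : p ≠ 0) :
    IsLeadingTerm s p c (p c).natDegree := by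
  have hpc : p c ≠ 0 := by
    intro h0
    apply hp
    rw [← rowDegVec_eq_bot_iff (s := s), ← h.1, h0, degree_zero, WithBot.bot_add]
  have hrow : rowDegVec s p = (((p c).natDegree + s c : ℕ) : WithBot ℕ) := by
    rw [← h.1, degree_add_natCast_eq_of_ne_zero hpc]
  refine ⟨leadingCoeff_ne_zero.mpr hpc, fun j e he hne => ?_⟩
  have hpj : p j ≠ 0 := fun h0 => he (by rw [h0, coeff_zero])
  have hej : e ≤ (p j).natDegree := le_natDegree_of_ne_zero he
  have hj : (p j).natDegree + s j ≤ (p c).natDegree + s c := by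
    have := degree_add_le_rowDegVec (s := s) p j
    rw [hrow, degree_add_natCast_eq_of_ne_zero hpj] at this
    exact_mod_cast this
  rcases (show s j + e ≤ s c + (p c).natDegree by omega).lt_or_eq with hlt | heq
  · exact Or.inl hlt
  · have hjc : j ≤ c := h.2 j <| by
      rw [hrow, degree_add_natCast_eq_of_ne_zero hpj]
      exact_mod_cast (by omega)
    have hjc' : j ≠ c := by
      rintro rfl
      exact hne (Prod.ext rfl (by omega))
    exact Or.inr ⟨heq, lt_of_le_of_ne hjc hjc'⟩

lemma isLeadingTerm_single {q : K[X]} (hq : q ≠ 0) (c : Fin m) :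
    IsLeadingTerm s (Pi.single c q) c q.natDegree := by
  refine ⟨by simpa using hq, fun j e he hne => ?_⟩
  obtain rfl : j = c := by
    by_contra hjc
    simp [hjc] at he
  simp only [Pi.single_eq_same] at he
  have hlt : e < q.natDegree :=
    (le_natDegree_of_ne_zero he).lt_of_ne fun h => hne (by rw [h])
  exact Or.inl (Nat.add_lt_add_left hlt _)

end LeadingTerm

section Krylov

variable {K : Type*} [Field K] {m σ δ : ℕ}
  (E : Matrix (Fin m) (Fin σ) K) (M : Matrix (Fin σ) (Fin σ) K) (s : Fin m → ℕ)

lemma sum_vecMul_aeval_eq_sum_coeff_smul {p : Fin m → K[X]}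
    (hp : ∀ i, (p i).degree ≤ (δ : WithBot ℕ)) :
    ∑ j, E j ᵥ* aeval M (p j)
      = ∑ y ∈ Finset.univ ×ˢ Finset.range (δ + 1), (p y.1).coeff y.2 • E y.1 ᵥ* M ^ y.2 := by
  rw [Finset.sum_product]
  refine Finset.sum_congr rfl fun j _ => ?_
  rw [aeval_eq_sum_range' (Nat.lt_succ_of_le (natDegree_le_iff_degree_le.mpr (hp j))), vecMul_sum]
  simp_rw [vecMul_smul]

variable {E M s}

lemma depEarlier_of_isInterpolant {p : Fin m → K[X]} {c : Fin m} {d : ℕ}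
    (hp : ∀ i, (p i).degree ≤ (δ : WithBot ℕ)) (hint : IsInterpolant E M p)
    (hlead : IsLeadingTerm s p c d) : DepEarlier E M s δ c d := by
  set B : Finset (Fin m × ℕ) := Finset.univ ×ˢ Finset.range (δ + 1)
  have hB : ∀ {y : Fin m × ℕ}, y ∈ B ↔ y.2 ≤ δ := by simp [B]
  have hcd : (c, d) ∈ B :=
    hB.mpr ((le_natDegree_of_ne_zero hlead.1).trans (natDegree_le_iff_degree_le.mpr (hp c)))
  have hsum := (sum_vecMul_aeval_eq_sum_coeff_smul E M hp).symm.trans hint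
  rw [← Finset.add_sum_erase B _ hcd] at hsum
  rw [DepEarlier, ← Submodule.smul_mem_iff _ hlead.1, eq_neg_of_add_eq_zero_left hsum]
  refine Submodule.neg_mem _ (Submodule.sum_mem _ fun y hy => ?_)
  by_cases hy0 : (p y.1).coeff y.2 = 0
  · simp [hy0]
  · refine Submodule.smul_mem _ _ (Submodule.subset_span ⟨y, ⟨?_, ?_⟩, rfl⟩)
    · exact hB.mp (Finset.mem_of_mem_erase hy)
    · exact hlead.2 _ _ hy0 (Finset.ne_of_mem_erase hy)

lemma exists_isInterpolant_of_depEarlier {c : Fin m} {d : ℕ} (hdep : DepEarlier E M s δ c d)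
    (hd : d ≤ δ) : ∃ p : Fin m → K[X], (∀ i, (p i).degree ≤ (δ : WithBot ℕ)) ∧
      IsInterpolant E M p ∧ IsLeadingTerm s p c d := by
  obtain ⟨l, hl_supp, hl⟩ := (Finsupp.mem_span_image_iff_linearCombination K).mp hdep
  have hl_lt : ∀ y, l y ≠ 0 → y.2 ≤ δ ∧ keyLt s y (c, d) := fun y hy =>
    hl_supp (Finsupp.mem_support_iff.mpr hy)
  have hl_cd : l (c, d) = 0 := by
    by_contra h
    exact keyLt_irrefl _ (hl_lt _ h).2
  -- the coefficients of the relation `row (c, d) - ∑ l y • row y = 0`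
  set g : Fin m × ℕ → K := fun y => (if y = (c, d) then 1 else 0) - l y
  have hg : ∀ y, g y ≠ 0 → y.2 ≤ δ ∧ (y ≠ (c, d) → keyLt s y (c, d)) := by
    intro y hy
    by_cases hyc : y = (c, d)
    · exact ⟨hyc ▸ hd, fun h => absurd hyc h⟩
    · have hly : l y ≠ 0 := by simpa [g, hyc] using hy
      exact ⟨(hl_lt y hly).1, fun _ => (hl_lt y hly).2⟩
  set p : Fin m → K[X] := fun j => ∑ e ∈ Finset.range (δ + 1), monomial e (g (j, e))
  have hcoeff : ∀ j e, (p j).coeff e = g (j, e) := by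
    intro j e
    simp only [p, finsetSum_coeff, coeff_monomial, Finset.sum_ite_eq', Finset.mem_range]
    split_ifs with he
    · rfl
    · by_contra h
      exact he (Nat.lt_succ_of_le (hg _ (Ne.symm h)).1)
  have hdeg : ∀ i, (p i).degree ≤ (δ : WithBot ℕ) := fun i =>
    degree_le_iff_coeff_zero _ _ |>.mpr fun e he => by
      by_contra h
      rw [hcoeff] at h
      exact absurd (hg _ h).1 (not_le.mpr (by exact_mod_cast he))
  refine ⟨p, hdeg, ?_, ?_, fun j e he hne => (hg (j, e) (hcoeff j e ▸ he)).2 hne⟩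
  · have hsupp : l.support ⊆ Finset.univ ×ˢ Finset.range (δ + 1) := fun y hy => by
      simpa [Nat.lt_succ_iff] using (hl_lt y (Finsupp.mem_support_iff.mp hy)).1
    rw [Finsupp.linearCombination_apply, Finsupp.sum_of_support_subset l hsupp _ (by simp)] at hl
    rw [IsInterpolant, sum_vecMul_aeval_eq_sum_coeff_smul E M hdeg]
    simp only [hcoeff, g, sub_smul, ite_smul, one_smul, zero_smul, Finset.sum_sub_distrib, hl,
      Finset.sum_ite_eq', Finset.mem_product, Finset.mem_univ, Finset.mem_range, true_and]
    simp [Nat.lt_succ_of_le hd]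
  · simp [hcoeff, g, hl_cd]

lemma depEarlier_of_natDegree_minpoly_le (hδ : (minpoly K M).natDegree ≤ δ) (c : Fin m) :
    DepEarlier E M s δ c δ := by
  have hμ : (minpoly K M).Monic := minpoly.monic (Algebra.IsIntegral.isIntegral M)
  set q : K[X] := X ^ (δ - (minpoly K M).natDegree) * minpoly K M
  have hq : q.Monic := (monic_X_pow _).mul hμ
  have hq_deg : q.natDegree = δ := by
    rw [(monic_X_pow _).natDegree_mul hμ, natDegree_X_pow]
    omega
  have hint : IsInterpolant E M (Pi.single c q) := by
    rw [IsInterpolant, Fintype.sum_eq_single c fun j hj => by simp [Pi.single_eq_of_ne hj]]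
    simp [q]
  have hdeg : ∀ i, ((Pi.single c q : Fin m → K[X]) i).degree ≤ (δ : WithBot ℕ) := by
    intro i
    by_cases hi : i = c
    · subst hi
      simpa [hq_deg] using degree_le_natDegree (p := q)
    · simp [Pi.single_eq_of_ne hi]
  exact depEarlier_of_isInterpolant hdeg hint (hq_deg ▸ isLeadingTerm_single hq.ne_zero c)

lemma IsMinDeg.le_of_depEarlier {dm : Fin m → ℕ} (hdm : IsMinDeg E M s δ dm) {c : Fin m} {d : ℕ}
    (hdep : DepEarlier E M s δ c d) : dm c ≤ d :=
  not_lt.mp fun hlt => (hdm c).2 d hlt hdep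

end Krylov

/-- any interpolant of degree at most `δ` with `s`-pivot index `c` has
`s`-pivot degree at least `δ_c`, and for each `c` there is an interpolant of degree at
most `δ` with `s`-pivot index `c` and `s`-pivot degree exactly `δ_c`. -/
theorem pivot_degree_ge_minimal_degree_and_exists
    {K : Type*} [Field K] {m σ δ : ℕ}
    (M : Matrix (Fin σ) (Fin σ) K) (E : Matrix (Fin m) (Fin σ) K) (s : Fin m → ℕ)
    (hδ : (minpoly K M).natDegree ≤ δ)
    (dm : Fin m → ℕ) (hdm : IsMinDeg E M s δ dm) :
    (∀ p : Fin m → Polynomial K, p ≠ 0 → (∀ i, (p i).degree ≤ (δ : WithBot ℕ)) →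
      IsInterpolant E M p → ∀ c, IsPivotIdx s p c → dm c ≤ (p c).natDegree)
    ∧ (∀ c : Fin m, ∃ p : Fin m → Polynomial K, p ≠ 0 ∧
        (∀ i, (p i).degree ≤ (δ : WithBot ℕ)) ∧ IsInterpolant E M p ∧
        IsPivotIdx s p c ∧ (p c).natDegree = dm c) := by
  refine ⟨fun p hp hdeg hint c hpiv =>
    hdm.le_of_depEarlier (depEarlier_of_isInterpolant hdeg hint (hpiv.isLeadingTerm hp)),
    fun c => ?_⟩
  have hdm_le : dm c ≤ δ := hdm.le_of_depEarlier (depEarlier_of_natDegree_minpoly_le hδ c)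
  obtain ⟨p, hdeg, hint, hlead⟩ := exists_isInterpolant_of_depEarlier (hdm c).1 hdm_le
  exact ⟨p, hlead.ne_zero, hdeg, hint, hlead.isPivotIdx, hlead.natDegree_eq⟩
end

section
/- Let s, t ∈ ℕ^m, let P ∈ K[X]^{m×m} be nonsingular and s-reduced with d = rdeg_s(P), and let R be an (s+t)-reduced form of P. Then the sum of the (s+t)-row degrees of R equals (Σ_i d_i) + (Σ_i t_i). -/
/-!
Scaling column `j` of a square `u`-reduced matrix `A` by `X ^ u j` turns its `u`-row degrees
`e i` into bounds on the ordinary degrees of the rows, and the coefficient of `X ^ (∑ e i)` in the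
determinant of the scaled matrix is `det (leadMat u A) ≠ 0`. Hence
`∑ rdeg_u A = deg det A + ∑ u`. Apply this to `P` with shift `s` and to `R = U * P` with shift
`s + t`: since `det U` is a nonzero constant, `deg det R = deg det P`, and the two identities
differ by exactly `∑ t`.
-/

open Polynomial Matrix

/-- The `s`-row degree of row `i` of `P`. -/
noncomputable def rowDegW {K : Type*} [Field K] {k m : ℕ} (s : Fin m → ℕ)
    (P : Matrix (Fin k) (Fin m) (Polynomial K)) (i : Fin k) : WithBot ℕ :=
  Finset.univ.sup fun j => (P i j).degree + (s j : WithBot ℕ)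

/-- The `s`-leading matrix of `P`. -/
noncomputable def leadMat {K : Type*} [Field K] {k m : ℕ} (s : Fin m → ℕ)
    (P : Matrix (Fin k) (Fin m) (Polynomial K)) : Matrix (Fin k) (Fin m) K :=
  fun i j =>
    if (P i j).degree + (s j : WithBot ℕ) = rowDegW s P i then (P i j).leadingCoeff else 0

/-- `P` is `s`-reduced. -/
def IsReducedS {K : Type*} [Field K] {k m : ℕ} (s : Fin m → ℕ)
    (P : Matrix (Fin k) (Fin m) (Polynomial K)) : Prop :=
  (leadMat s P).rank = k

theorem Matrix.isUnit_of_rank_eq_card {K n : Type*} [Field K] [Fintype n] [DecidableEq n]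
    {A : Matrix n n K} (h : A.rank = Fintype.card n) : IsUnit A := by
  refine mulVec_surjective_iff_isUnit.1 fun v => ?_
  have : LinearMap.range A.mulVecLin = ⊤ :=
    Submodule.eq_top_of_finrank_eq (by rw [Module.finrank_fintype_fun_eq_card]; exact h)
  exact LinearMap.range_eq_top.1 this v

namespace Polynomial

theorem coeff_prod_of_natDegree_le_sum {R ι : Type*} [CommSemiring R] (s : Finset ι)
    (f : ι → R[X]) (n : ι → ℕ) (h : ∀ i ∈ s, (f i).natDegree ≤ n i) :
    (∏ i ∈ s, f i).coeff (∑ i ∈ s, n i) = ∏ i ∈ s, (f i).coeff (n i) := by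
  induction s using Finset.cons_induction with
  | empty => simp
  | cons a s ha ih =>
    rw [Finset.forall_mem_cons] at h
    rw [Finset.prod_cons, Finset.sum_cons, Finset.prod_cons,
      coeff_mul_add_eq_of_natDegree_le h.1
        ((natDegree_prod_le s f).trans (Finset.sum_le_sum h.2)), ih h.2]

theorem coeff_mul_X_pow_of_degree_add_le {R : Type*} [Semiring R] [Nontrivial R] {p : R[X]}
    {n e : ℕ} (h : p.degree + n ≤ e) :
    (p * X ^ n).coeff e = if p.degree + n = e then p.leadingCoeff else 0 := by
  rw [← degree_mul_X_pow] at h ⊢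
  split_ifs with heq
  · rw [← leadingCoeff_mul_X_pow (n := n), leadingCoeff, natDegree_eq_of_degree_eq_some heq]
  · exact coeff_eq_zero_of_degree_lt (lt_of_le_of_ne h heq)

end Polynomial

namespace Matrix

open Equiv

variable {R n : Type*} [CommRing R] [Fintype n] [DecidableEq n]

theorem natDegree_det_le_sum {B : Matrix n n R[X]} {e : n → ℕ}
    (h : ∀ i j, (B i j).natDegree ≤ e i) : B.det.natDegree ≤ ∑ i, e i := by
  rw [det_apply]
  refine natDegree_sum_le_of_forall_le _ _ fun σ _ => (natDegree_smul_le _ _).trans ?_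
  rw [← Equiv.sum_comp σ e]
  exact (natDegree_prod_le _ _).trans (Finset.sum_le_sum fun i _ => h (σ i) i)

theorem coeff_det_sum_of_natDegree_le {B : Matrix n n R[X]} {e : n → ℕ}
    (h : ∀ i j, (B i j).natDegree ≤ e i) :
    B.det.coeff (∑ i, e i) = (of fun i j => (B i j).coeff (e i)).det := by
  rw [det_apply, det_apply, finsetSum_coeff]
  refine Finset.sum_congr rfl fun σ _ => ?_
  rw [coeff_smul, ← Equiv.sum_comp σ e,
    coeff_prod_of_natDegree_le_sum _ _ _ fun i _ => h (σ i) i]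
  rfl

end Matrix

section ShiftedDegrees

variable {K : Type*} [Field K] {m : ℕ} (u : Fin m → ℕ)

theorem le_rowDegW {k : ℕ} (A : Matrix (Fin k) (Fin m) K[X]) (i : Fin k) (j : Fin m) :
    (A i j).degree + u j ≤ rowDegW u A i :=
  Finset.le_sup (f := fun j => (A i j).degree + (u j : WithBot ℕ)) (Finset.mem_univ j)

theorem det_leadMat_ne_zero {A : Matrix (Fin m) (Fin m) K[X]} (hA : IsReducedS u A) :
    (leadMat u A).det ≠ 0 :=
  ((isUnit_iff_isUnit_det _).1 (isUnit_of_rank_eq_card (by rw [hA, Fintype.card_fin]))).ne_zero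

theorem rowDegW_ne_bot {k : ℕ} {A : Matrix (Fin k) (Fin m) K[X]} {i : Fin k}
    (h : leadMat u A i ≠ 0) : rowDegW u A i ≠ ⊥ := by
  intro hbot
  refine h (funext fun j => ?_)
  have hj : (A i j).degree + u j = ⊥ := le_bot_iff.1 (hbot ▸ le_rowDegW u A i j)
  simp [leadMat, degree_eq_bot.1 (WithBot.add_eq_bot.1 hj |>.resolve_right WithBot.coe_ne_bot)]

theorem coeff_mul_X_pow_rowDegW {k : ℕ} {A : Matrix (Fin k) (Fin m) K[X]} {i : Fin k} {e : ℕ}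
    (he : rowDegW u A i = e) (j : Fin m) :
    (A i j * X ^ u j).coeff e = leadMat u A i j := by
  rw [leadMat, he]
  exact coeff_mul_X_pow_of_degree_add_le (he ▸ le_rowDegW u A i j)

theorem sum_rowDegW_eq_degree_det_add {A : Matrix (Fin m) (Fin m) K[X]} (hA : IsReducedS u A) :
    ∑ i, rowDegW u A i = A.det.degree + ((∑ i, u i : ℕ) : WithBot ℕ) := by
  have hlead := det_leadMat_ne_zero u hA
  have hrow : ∀ i, rowDegW u A i ≠ ⊥ := fun i =>
    rowDegW_ne_bot u fun hi => hlead (det_eq_zero_of_row_eq_zero i (by simp [hi]))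
  choose e he using fun i => WithBot.ne_bot_iff_exists.1 (hrow i)
  set B := A * diagonal fun j => (X : K[X]) ^ u j
  have hB : ∀ i j, B i j = A i j * X ^ u j := fun i j => mul_diagonal _ _ i j
  have hBdeg : ∀ i j, (B i j).natDegree ≤ e i := fun i j => by
    rw [natDegree_le_iff_degree_le, hB, degree_mul_X_pow]
    exact (le_rowDegW u A i j).trans_eq (he i).symm
  have hBcoeff : (of fun i j => (B i j).coeff (e i)) = leadMat u A := by
    ext i j
    rw [of_apply, hB, coeff_mul_X_pow_rowDegW u (he i).symm]
  have hBdet : B.det.degree = ((∑ i, e i : ℕ) : WithBot ℕ) := degree_eq_of_le_of_coeff_ne_zero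
    (natDegree_le_iff_degree_le.1 (natDegree_det_le_sum hBdeg))
    (by rwa [coeff_det_sum_of_natDegree_le hBdeg, hBcoeff])
  calc ∑ i, rowDegW u A i = ((∑ i, e i : ℕ) : WithBot ℕ) := by
        simp only [← he, Nat.cast_sum, Nat.cast_withBot]
    _ = B.det.degree := hBdet.symm
    _ = A.det.degree + ((∑ i, u i : ℕ) : WithBot ℕ) := by
      rw [det_mul, det_diagonal, Finset.prod_pow_eq_pow_sum, degree_mul_X_pow]

end ShiftedDegrees

theorem sum_shifted_rowDeg_reduced_form_general
    {K : Type*} [Field K] {m : ℕ} (s t : Fin m → ℕ)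
    (P : Matrix (Fin m) (Fin m) (Polynomial K))
    (hPred : IsReducedS s P)
    (d : Fin m → ℕ) (hd : ∀ i, rowDegW s P i = (d i : WithBot ℕ))
    (R : Matrix (Fin m) (Fin m) (Polynomial K))
    (hequiv : ∃ U : Matrix (Fin m) (Fin m) (Polynomial K), IsUnit U ∧ R = U * P)
    (hRred : IsReducedS (fun i => s i + t i) R) :
    ∑ i, rowDegW (fun i => s i + t i) R i = (((∑ i, d i) + ∑ i, t i : ℕ) : WithBot ℕ) := by
  obtain ⟨U, hU, rfl⟩ := hequiv
  have hdet : (U * P).det.degree = P.det.degree := by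
    rw [det_mul, degree_mul, degree_eq_zero_of_isUnit ((isUnit_iff_isUnit_det U).1 hU), zero_add]
  have hP := sum_rowDegW_eq_degree_det_add s hPred
  simp only [hd, ← Nat.cast_sum] at hP
  rw [sum_rowDegW_eq_degree_det_add _ hRred, hdet, Finset.sum_add_distrib, Nat.cast_add,
    ← add_assoc, ← hP, Nat.cast_add]

/-- if `P` is nonsingular and `s`-reduced with `d = rdeg_s(P)`, and `R`
is an `(s+t)`-reduced form of `P`, then the sum of the `(s+t)`-row degrees of `R`
equals `(Σ d_i) + (Σ t_i)`. -/
theorem sum_shifted_rowDeg_reduced_form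
    {K : Type*} [Field K] {m : ℕ} (s t : Fin m → ℕ)
    (P : Matrix (Fin m) (Fin m) (Polynomial K))
    (hPns : P.det ≠ 0) (hPred : IsReducedS s P)
    (d : Fin m → ℕ) (hd : ∀ i, rowDegW s P i = (d i : WithBot ℕ))
    (R : Matrix (Fin m) (Fin m) (Polynomial K))
    (hequiv : ∃ U : Matrix (Fin m) (Fin m) (Polynomial K), IsUnit U ∧ R = U * P)
    (hRred : IsReducedS (fun i => s i + t i) R) :
    ∑ i, rowDegW (fun i => s i + t i) R i = (((∑ i, d i) + ∑ i, t i : ℕ) : WithBot ℕ) :=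
  sum_shifted_rowDeg_reduced_form_general s t P hPred d hd R hequiv hRred
end
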